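/- Let ε > 0 and let J : ℝ³ → ℝ³ be continuously differentiable with compact support and divergence free (div J = 0 on ℝ³). If the electric far field pattern vanishes identically, i.e. E_∞(x̂,k) = 0 for all x̂ on the unit sphere S² and all k > 0, then J = 0 on ℝ³. -/

import Mathlib

/-!
STATEMENT 11: uniqueness for divergence-free electromagnetic sources.
If `J : ℝ³ → ℝ³` is C¹, compactly supported, divergence free, and its electric far
field pattern vanishes for all directions on the unit sphere and all `k > 0`,
then `J = 0` on ℝ³.
-/

open MeasureTheory Real

noncomputable section

namespace EMUniq

abbrev E3 := EuclideanSpace ℝ (Fin 3)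

/-- Cross product in ℂ³. -/
def crossC (u v : Fin 3 → ℂ) : Fin 3 → ℂ :=
  ![u 1 * v 2 - u 2 * v 1, u 2 * v 0 - u 0 * v 2, u 0 * v 1 - u 1 * v 0]

/-- Electric far field pattern
`E_∞(x̂,k) := (ik/(4π√ε)) x̂ × ((∫ e^{-i k x̂·y} J(y) dy) × x̂)`. -/
def Einf (eps : ℝ) (J : E3 → Fin 3 → ℝ) (xhat : E3) (k : ℝ) : Fin 3 → ℂ :=
  fun j => (Complex.I * (k : ℂ) / ((4 * π * Real.sqrt eps : ℝ) : ℂ)) *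
    crossC (fun i => ((xhat i : ℝ) : ℂ))
      (crossC
        (fun i => ∫ y : E3,
          Complex.exp (-Complex.I * (k : ℂ) * ((∑ i', xhat i' * y i' : ℝ) : ℂ)) *
            ((J y i : ℝ) : ℂ))
        (fun i => ((xhat i : ℝ) : ℂ))) j

/-- Divergence `div J = ∂₁J₁ + ∂₂J₂ + ∂₃J₃`. -/
def divJ (J : E3 → Fin 3 → ℝ) (x : E3) : ℝ :=
  ∑ j, fderiv ℝ (fun y => J y j) x (EuclideanSpace.single j (1 : ℝ))

open scoped FourierTransform RealInnerProductSpace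

/-- Algebraic resolution of the double cross product: if `a` is a complexified unit
vector, `g` is orthogonal to `a` and `a × (g × a) = 0`, then `g = 0`. -/
lemma cross_resolve (a g : Fin 3 → ℂ)
    (h2 : a 0 ^ 2 + a 1 ^ 2 + a 2 ^ 2 = 1)
    (hd : a 0 * g 0 + a 1 * g 1 + a 2 * g 2 = 0)
    (hc : ∀ j, crossC a (crossC g a) j = 0) : ∀ j, g j = 0 := by
  have hc0 := hc 0
  have hc1 := hc 1
  have hc2 := hc 2
  simp only [crossC, Matrix.cons_val_zero, Matrix.cons_val_one, Matrix.head_cons,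
    Matrix.cons_val_two, Matrix.tail_cons] at hc0 hc1 hc2
  intro j
  fin_cases j
  · show g 0 = 0
    linear_combination hc0 - g 0 * h2 + a 0 * hd
  · show g 1 = 0
    linear_combination hc1 - g 1 * h2 + a 1 * hd
  · show g 2 = 0
    linear_combination hc2 - g 2 * h2 + a 2 * hd

theorem uniqueness_em_source (eps : ℝ) (heps : 0 < eps)
    (J : E3 → Fin 3 → ℝ) (hJ : ContDiff ℝ 1 J) (hJ_supp : HasCompactSupport J)
    (hdiv : ∀ x : E3, divJ J x = 0)
    (hvanish : ∀ xhat : E3, ‖xhat‖ = 1 → ∀ k : ℝ, 0 < k → Einf eps J xhat k = 0) :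
    ∀ x : E3, J x = 0 := by
  classical
  set F : Fin 3 → E3 → ℂ := fun j y => ((J y j : ℝ) : ℂ) with hFdef
  have hJc : ∀ j, ContDiff ℝ 1 fun y => J y j := fun j =>
    (ContinuousLinearMap.proj (R := ℝ) (φ := fun _ : Fin 3 => ℝ) j).contDiff.comp hJ
  have hFc : ∀ j, ContDiff ℝ 1 (F j) := fun j =>
    Complex.ofRealCLM.contDiff.comp (hJc j)
  have hFsupp : ∀ j, HasCompactSupport (F j) := fun j =>
    hJ_supp.comp_left (g := fun v : Fin 3 → ℝ => ((v j : ℝ) : ℂ)) (by simp)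
  have hFint : ∀ j, Integrable (F j) := fun j =>
    (hFc j).continuous.integrable_of_hasCompactSupport (hFsupp j)
  have hFdiff : ∀ j, Differentiable ℝ (F j) := fun j => (hFc j).differentiable one_ne_zero
  have hFderiv_int : ∀ j, Integrable (fderiv ℝ (F j)) := fun j =>
    ((hFc j).continuous_fderiv one_ne_zero).integrable_of_hasCompactSupport ((hFsupp j).fderiv ℝ)
  -- derivative of the complexified component
  have hfd : ∀ j y, fderiv ℝ (F j) y =
      Complex.ofRealCLM.comp (fderiv ℝ (fun z => J z j) y) := by
    intro j y
    have h1 : HasFDerivAt (fun z => J z j) (fderiv ℝ (fun z => J z j) y) y :=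
      ((hJc j).differentiable one_ne_zero y).hasFDerivAt
    have h2 : HasFDerivAt (fun t : ℝ => (t : ℂ)) Complex.ofRealCLM (J y j) :=
      Complex.ofRealCLM.hasFDerivAt
    exact (h2.comp y h1).fderiv
  -- complexified divergence vanishes
  have hdivC : ∀ y : E3, ∑ j, fderiv ℝ (F j) y (EuclideanSpace.single j (1 : ℝ)) = 0 := by
    intro y
    have h := hdiv y
    unfold divJ at h
    simp only [hfd, ContinuousLinearMap.comp_apply, Complex.ofRealCLM_apply]
    rw [← Complex.ofReal_sum]
    rw [h, Complex.ofReal_zero]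
  -- orthogonality of the Fourier transform to the frequency vector
  have hperp : ∀ w : E3, ∑ j, ((w j : ℝ) : ℂ) * 𝓕 (F j) w = 0 := by
    intro w
    have hi : ∀ j : Fin 3,
        Integrable fun y => fderiv ℝ (F j) y (EuclideanSpace.single j (1 : ℝ)) := fun j =>
      (ContinuousLinearMap.apply ℝ ℂ (EuclideanSpace.single j (1 : ℝ))).integrable_comp
        (hFderiv_int j)
    have key : ∑ j, 𝓕 (fun y => fderiv ℝ (F j) y (EuclideanSpace.single j (1 : ℝ))) w = 0 := by
      have : ∀ j : Fin 3, 𝓕 (fun y => fderiv ℝ (F j) y (EuclideanSpace.single j (1 : ℝ))) w =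
          ∫ y : E3, Real.fourierChar (-⟪y, w⟫) •
            fderiv ℝ (F j) y (EuclideanSpace.single j (1 : ℝ)) := fun j =>
        Real.fourier_eq _ _
      rw [Finset.sum_congr rfl fun j _ => this j,
        ← integral_finset_sum _ (fun j _ => (Real.fourierIntegral_convergent_iff w).2 (hi j))]
      have hz : ∀ y : E3, (∑ j, Real.fourierChar (-⟪y, w⟫) •
          fderiv ℝ (F j) y (EuclideanSpace.single j (1 : ℝ))) = 0 := by
        intro y
        rw [← Finset.smul_sum, hdivC y, smul_zero]
      simp only [hz, integral_zero]
    have halt : ∀ j : Fin 3,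
        𝓕 (fun y => fderiv ℝ (F j) y (EuclideanSpace.single j (1 : ℝ))) w =
          (2 * π * Complex.I) * ((w j : ℝ) : ℂ) * 𝓕 (F j) w := by
      intro j
      rw [← Real.fourier_continuousLinearMap_apply (hFderiv_int j),
        Real.fourier_fderiv (hFint j) (hFdiff j) (hFderiv_int j)]
      simp only [VectorFourier.fourierSMulRight_apply, ContinuousLinearMap.neg_apply,
        innerSL_apply_apply ℝ, EuclideanSpace.inner_single_right, RCLike.conj_to_real,
        conj_trivial, one_mul, neg_smul, smul_smul, smul_eq_mul, neg_neg,
        Complex.real_smul]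
      ring
    rw [Finset.sum_congr rfl fun j _ => halt j] at key
    have h2πI : (2 * (π : ℂ) * Complex.I) ≠ 0 := by
      simp [Real.pi_ne_zero, Complex.I_ne_zero]
    have : (2 * (π : ℂ) * Complex.I) * ∑ j, ((w j : ℝ) : ℂ) * 𝓕 (F j) w = 0 := by
      rw [Finset.mul_sum]
      rw [← key]
      congr 1
      ext j
      ring
    exact (mul_eq_zero.mp this).resolve_left h2πI
  -- vanishing of the Fourier transform away from the origin
  have hFzero : ∀ w : E3, w ≠ 0 → ∀ j, 𝓕 (F j) w = 0 := by
    intro w hw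
    have hwn : (0 : ℝ) < ‖w‖ := norm_pos_iff.2 hw
    set k : ℝ := 2 * π * ‖w‖ with hk
    have hkpos : 0 < k := by positivity
    set xh : E3 := ‖w‖⁻¹ • w with hxhdef
    have hxh : ‖xh‖ = 1 := by
      rw [hxhdef, norm_smul, norm_inv, norm_norm, inv_mul_cancel₀ hwn.ne']
    have hvan := hvanish xh hxh k hkpos
    -- identify the integral in `Einf` with the Fourier transform at `w`
    have hFT : ∀ j : Fin 3,
        (∫ y : E3, Complex.exp (-Complex.I * (k : ℂ) * ((∑ i', xh i' * y i' : ℝ) : ℂ)) *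
          ((J y j : ℝ) : ℂ)) = 𝓕 (F j) w := by
      intro j
      rw [Real.fourier_eq']
      refine integral_congr_ae (Filter.Eventually.of_forall fun y => ?_)
      have hxi : ∀ i, xh i = ‖w‖⁻¹ * w i := fun i => rfl
      have hreal : k * (∑ i', xh i' * y i') = 2 * π * ⟪y, w⟫ := by
        simp only [hxi, PiLp.inner_apply, RCLike.inner_apply, conj_trivial, Finset.mul_sum]
        refine Finset.sum_congr rfl fun i _ => ?_
        rw [hk]
        field_simp
      have hexp : -Complex.I * (k : ℂ) * ((∑ i', xh i' * y i' : ℝ) : ℂ)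
          = ((-2 * π * ⟪y, w⟫ : ℝ) : ℂ) * Complex.I := by
        have h2 : ((k * ∑ i', xh i' * y i' : ℝ) : ℂ) = ((2 * π * ⟪y, w⟫ : ℝ) : ℂ) :=
          congrArg Complex.ofReal hreal
        push_cast at h2 ⊢
        linear_combination (-Complex.I) * h2
      simp only [smul_eq_mul, hexp, hFdef]
    -- extract the cross product equations
    set a : Fin 3 → ℂ := fun i => ((xh i : ℝ) : ℂ) with hadef
    set g : Fin 3 → ℂ := fun j => 𝓕 (F j) w with hgdef
    have hcross : ∀ j, crossC a (crossC g a) j = 0 := by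
      intro j
      have hv := congrFun hvan j
      unfold Einf at hv
      have hInt : (fun i => ∫ y : E3,
          Complex.exp (-Complex.I * (k : ℂ) * ((∑ i', xh i' * y i' : ℝ) : ℂ)) *
            ((J y i : ℝ) : ℂ)) = g := funext fun i => hFT i
      rw [hInt] at hv
      have hc_ne : (Complex.I * (k : ℂ) / ((4 * π * Real.sqrt eps : ℝ) : ℂ)) ≠ 0 := by
        apply div_ne_zero
        · exact mul_ne_zero Complex.I_ne_zero (by exact_mod_cast hkpos.ne')
        · have : (0 : ℝ) < 4 * π * Real.sqrt eps := by positivity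
          exact_mod_cast this.ne'
      exact (mul_eq_zero.mp hv).resolve_left hc_ne
    have h2 : a 0 ^ 2 + a 1 ^ 2 + a 2 ^ 2 = 1 := by
      have hn : ⟪xh, xh⟫ = 1 := by
        rw [real_inner_self_eq_norm_sq, hxh]; norm_num
      have hsum : xh 0 * xh 0 + xh 1 * xh 1 + xh 2 * xh 2 = 1 := by
        rw [← hn]
        simp only [PiLp.inner_apply, RCLike.inner_apply, conj_trivial, Fin.sum_univ_three]
      have := congrArg Complex.ofReal hsum
      push_cast at this
      simp only [hadef]
      linear_combination this
    have hd : a 0 * g 0 + a 1 * g 1 + a 2 * g 2 = 0 := by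
      have hp := hperp w
      rw [Fin.sum_univ_three] at hp
      have hxi : ∀ i, xh i = ‖w‖⁻¹ * w i := fun i => rfl
      have : a 0 * g 0 + a 1 * g 1 + a 2 * g 2 =
          ((‖w‖⁻¹ : ℝ) : ℂ) * (((w 0 : ℝ) : ℂ) * g 0 + ((w 1 : ℝ) : ℂ) * g 1 +
            ((w 2 : ℝ) : ℂ) * g 2) := by
        simp only [hadef, hxi]
        push_cast
        ring
      rw [this, hp, mul_zero]
    exact cross_resolve a g h2 hd hcross
  -- the Fourier transform vanishes a.e., hence everywhere by inversion
  have hae : ∀ᵐ w : E3, w ≠ (0 : E3) := by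
    rw [ae_iff]
    simp only [not_not, Set.setOf_eq_eq_singleton]
    exact measure_singleton 0
  have hFae : ∀ j, 𝓕 (F j) =ᵐ[volume] 0 := by
    intro j
    filter_upwards [hae] with w hw
    exact hFzero w hw j
  intro x
  funext j
  have hintF : Integrable (𝓕 (F j)) := (integrable_zero _ _ _).congr (hFae j).symm
  have hinv := (hFint j).fourierInv_fourier_eq hintF ((hFc j).continuous.continuousAt (x := x))
  have hz : 𝓕⁻ (𝓕 (F j)) x = 0 := by
    rw [Real.fourierInv_eq]
    have h0 : (fun v : E3 => Real.fourierChar ⟪v, x⟫ • 𝓕 (F j) v) =ᵐ[volume]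
        (fun _ => (0 : ℂ)) := by
      filter_upwards [hFae j] with v hv
      simp [hv]
    rw [integral_congr_ae h0, integral_zero]
  have hFx : F j x = 0 := by rw [← hinv, hz]
  simp only [hFdef] at hFx
  have hJ0 : J x j = 0 := by exact_mod_cast hFx
  simpa using hJ0

end EMUniq

end
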